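/- arXiv:math/0612753 — 3 statements merged into one kernel-verified Lean document; each statement's English description precedes it below -/
import Mathlib

section
/- Assume the Continuum Hypothesis. Then there exists a subgroup G of the Baire group ℤ^ℕ (the countable product of copies of the discrete group of integers, with the product topology) such that G is Menger-bounded but the group G × G is not Menger-bounded. -/
open Set Filter Pointwise

/-- A topological (additive) group is Menger-bounded (o-bounded) if for every sequence
of neighborhoods of the identity there are finite sets `F n` with `G = ⋃ n, F n + U n`. -/
def MengerBounded (G : Type*) [AddGroup G] [TopologicalSpace G] : Prop :=
  ∀ U : ℕ → Set G, (∀ n, U n ∈ nhds (0 : G)) →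
    ∃ F : ℕ → Set G, (∀ n, (F n).Finite) ∧ (⋃ n, (F n + U n)) = univ

/-!
List all `c : ℕ → ℕ` (by CH) as `c_α`, `α < ω₁`, and build pairs `(x_α, y_α)` of integer
sequences by transfinite recursion such that `|x_α n| + |y_α n| > c_α n` for all `n`, while every
element `g` of the group they generate is frequently sublinear: for every `K`,
`K * max_{i ≤ q} |g i| ≤ q` for infinitely many `q`. The latter makes the group Menger-bounded,
since at such a `q` the prefix of `g` up to `q` lies in a finite box; the former prevents finitely
many pairs per coordinate from covering the square.

At stage `α` there are only countably many tasks `(h, (a, b))` with `h` in the group built so far,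
so `(x_α, y_α)` is built in blocks, one task per block and each task recurring infinitely often.
On the block of `(h, (a, b))` the pair is a large multiple of `(-b, a)`, so `a • x_α + b • y_α`
vanishes there, and the block is so long that at its end everything before it, and `h`, is
negligible.
-/

namespace BaireGroup

theorem exists_family_of_finiteCharacter {T X : Type*} [LinearOrder T] [WellFoundedLT T]
    [Nonempty X] (hT : ∀ α : T, (Iio α).Countable) {Good : Set X → Prop} (h₀ : Good ∅)
    (hfin : ∀ A, Good A ↔ ∀ B : Finset X, ↑B ⊆ A → Good B) {Q : T → X → Prop}
    (step : ∀ α A, A.Countable → Good A → ∃ x, Q α x ∧ Good (insert x A)) :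
    ∃ f : T → X, (∀ α, Q α (f α)) ∧ Good (range f) := by
  classical
  have hmono : ∀ {A B}, A ⊆ B → Good B → Good A := fun hAB hB =>
    (hfin _).2 fun C hC => (hfin _).1 hB C (hC.trans hAB)
  have (α : T) : Countable (Iio α) := (hT α).to_subtype
  let next (α : T) (IH : ∀ β < α, X) : X :=
    if h : Good (range fun β : Iio α => IH β β.2) then
      (step α _ (countable_range _) h).choose
    else Classical.arbitrary X
  let f : T → X := wellFounded_lt.fix next
  have hf (α : T) : f α = next α fun β _ => f β := wellFounded_lt.fix_eq next α
  -- A finite subset of `f '' S` lies in `f '' Iic β` for its largest index `β`.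
  have good_image (S : Set T) (hS : ∀ β ∈ S, Good (f '' Iic β)) : Good (f '' S) := by
    refine (hfin _).2 fun B hB => ?_
    obtain ⟨S', hS'S, rfl⟩ := Finset.subset_set_image_iff.1 hB
    obtain rfl | hne := S'.eq_empty_or_nonempty
    · simpa using h₀
    refine hmono ?_ (hS _ (hS'S (S'.max'_mem hne)))
    rw [Finset.coe_image]
    exact image_mono fun β hβ => S'.le_max' β hβ
  have key (α : T) : Q α (f α) ∧ Good (f '' Iic α) := by
    induction α using WellFoundedLT.induction with
    | _ α IH =>
      have hprev : Good (f '' Iio α) := good_image _ fun β hβ => (IH β hβ).2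
      have hrange : (range fun β : Iio α => f β) = f '' Iio α := (image_eq_range f _).symm
      have hspec := (step α _ ((hT α).image f) hprev).choose_spec
      have hfα : f α = (step α _ ((hT α).image f) hprev).choose := by
        rw [hf]
        simp only [next, hrange, dif_pos hprev]
      rw [← Iio_insert, image_insert_eq, hfα]
      exact hspec
  exact ⟨f, fun α => (key α).1, by simpa using good_image univ fun β _ => (key β).2⟩

def maxAbs (g : ℕ → ℤ) : ℕ →o ℕ := partialSups fun i => (g i).natAbs

theorem natAbs_le_maxAbs (g : ℕ → ℤ) {i q : ℕ} (h : i ≤ q) : (g i).natAbs ≤ maxAbs g q :=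
  le_partialSups_of_le (fun i => (g i).natAbs) h

theorem maxAbs_le_iff {g : ℕ → ℤ} {q B : ℕ} : maxAbs g q ≤ B ↔ ∀ i ≤ q, (g i).natAbs ≤ B :=
  partialSups_le_iff

theorem maxAbs_add_le (g h : ℕ → ℤ) (q : ℕ) : maxAbs (g + h) q ≤ maxAbs g q + maxAbs h q :=
  maxAbs_le_iff.2 fun _ hi => (Int.natAbs_add_le _ _).trans <|
    add_le_add (natAbs_le_maxAbs g hi) (natAbs_le_maxAbs h hi)

def FrequentlySublinear (g : ℕ → ℤ) : Prop := ∀ K : ℕ, ∃ᶠ q in atTop, K * maxAbs g q ≤ q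

theorem frequentlySublinear_zero : FrequentlySublinear 0 := fun _ =>
  Frequently.of_forall fun q => by
    have : maxAbs 0 q ≤ 0 := maxAbs_le_iff.2 fun _ _ => by simp
    simp [Nat.le_zero.1 this]

theorem exists_forall_lt_imp_mem_of_mem_nhds {G : AddSubgroup (ℕ → ℤ)} {U : Set G}
    (hU : U ∈ nhds 0) : ∃ m, ∀ g : G, (∀ i < m, (g : ℕ → ℤ) i = 0) → g ∈ U := by
  obtain ⟨t, ht, htU⟩ := (mem_nhds_subtype _ _ _).1 hU
  rw [nhds_pi, Filter.mem_pi] at ht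
  obtain ⟨I, hI, s, hs, hIs⟩ := ht
  obtain ⟨m, hm⟩ := hI.bddAbove
  refine ⟨m + 1, fun g hg => htU (hIs fun i hi => ?_)⟩
  rw [hg i (Nat.lt_succ_of_le (hm hi))]
  exact mem_of_mem_nhds (hs i)

theorem exists_finite_forall_agree (G : AddSubgroup (ℕ → ℤ)) (m B : ℕ) :
    ∃ F : Set G, F.Finite ∧ ∀ g : G, (∀ i < m, ((g : ℕ → ℤ) i).natAbs ≤ B) →
      ∃ f ∈ F, ∀ i < m, (f : ℕ → ℤ) i = (g : ℕ → ℤ) i := by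
  let restrict (g : G) : Fin m → ℤ := fun i => (g : ℕ → ℤ) i
  let S := {g : G | ∀ i < m, ((g : ℕ → ℤ) i).natAbs ≤ B}
  obtain ⟨F, hF, hinj⟩ := exists_image_eq_and_injOn S restrict
  have hbox : (restrict '' S).Finite := by
    refine (Set.Finite.pi' fun _ => Set.finite_Icc (-(B : ℤ)) B).subset ?_
    rintro _ ⟨g, hg, rfl⟩ i
    have := hg i i.2
    simp only [restrict, mem_Icc]
    omega
  refine ⟨F, Set.Finite.of_finite_image (hF ▸ hbox) hinj, fun g hg => ?_⟩
  obtain ⟨f, hfF, hfg⟩ : restrict g ∈ restrict '' F := hF ▸ mem_image_of_mem restrict hg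
  exact ⟨f, hfF, fun i hi => congrFun hfg ⟨i, hi⟩⟩

theorem mengerBounded_of_frequently_maxAbs_le (G : AddSubgroup (ℕ → ℤ))
    (h : ∀ g ∈ G, ∃ᶠ q in atTop, maxAbs g q ≤ q) : MengerBounded G := by
  intro U hU
  choose m hm using fun n => exists_forall_lt_imp_mem_of_mem_nhds (hU n)
  -- Enlarging `m` to a strictly increasing `M` only shrinks the neighborhoods.
  let M (n : ℕ) : ℕ := n + ∑ k ∈ Finset.range (n + 1), m k
  have hM : StrictMono M := strictMono_nat_of_lt_succ fun n => by
    simp only [M, Finset.sum_range_succ]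
    omega
  have hmM (n : ℕ) : m n ≤ M n :=
    le_add_left (Finset.single_le_sum (fun _ _ => Nat.zero_le _) (Finset.self_mem_range_succ n))
  choose F hF hcover using fun n => exists_finite_forall_agree G (M n) (M (n + 1))
  refine ⟨F, hF, eq_univ_of_forall fun g => mem_iUnion.2 ?_⟩
  obtain ⟨q, hMq, hq⟩ := (h g g.2).forall_exists_of_atTop (M 0)
  have hM_normal : Order.IsNormal M :=
    Order.isNormal_iff.2 ⟨hM, fun _ ho => (Order.not_isSuccLimit_of_isSuccArchimedean ho).elim⟩
  obtain ⟨n, hnq, hqn⟩ := hM_normal.exists_map_le_lt_map_succ hMq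
  obtain ⟨f, hfF, hfg⟩ := hcover n g fun i hi =>
    (natAbs_le_maxAbs g (by omega)).trans (hq.trans hqn.le)
  refine ⟨n, f, hfF, g - f, hm n _ fun i hi => ?_, add_sub_cancel _ _⟩
  simp [hfg i (hi.trans_le (hmM n))]

theorem not_mengerBounded_prod (G : AddSubgroup (ℕ → ℤ))
    (h : ∀ c : ℕ → ℕ, ∃ x ∈ G, ∃ y ∈ G, ∀ n, c n < (x n).natAbs + (y n).natAbs) :
    ¬ MengerBounded (G × G) := by
  intro hG
  let V (n : ℕ) : Set G := {g | (g : ℕ → ℤ) n = 0}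
  have hV (n : ℕ) : V n ∈ nhds 0 :=
    ((isOpen_discrete {0}).preimage ((continuous_apply n).comp continuous_subtype_val)).mem_nhds
      (by simp)
  obtain ⟨F, hF, hcover⟩ := hG (fun n => V n ×ˢ V n) fun n => prod_mem_nhds (hV n) (hV n)
  let size (n : ℕ) (p : G × G) : ℕ := ((p.1 : ℕ → ℤ) n).natAbs + ((p.2 : ℕ → ℤ) n).natAbs
  obtain ⟨x, hx, y, hy, hxy⟩ := h fun n => (hF n).toFinset.sup (size n)
  obtain ⟨n, a, ha, u, ⟨hu₁, hu₂⟩, hau⟩ :=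
    mem_iUnion.1 (hcover ▸ mem_univ ((⟨x, hx⟩, ⟨y, hy⟩) : G × G))
  have hsize : size n (⟨x, hx⟩, ⟨y, hy⟩) = size n a := by
    rw [← hau]
    simp only [size, Prod.fst_add, Prod.snd_add, AddSubgroup.coe_add, Pi.add_apply]
    rw [show (u.1 : ℕ → ℤ) n = 0 from hu₁, show (u.2 : ℕ → ℤ) n = 0 from hu₂, add_zero, add_zero]
  exact (hxy n).not_ge ((hsize.trans_le (Finset.le_sup ((hF n).mem_toFinset.2 ha))))


def l1 (d : ℤ × ℤ) : ℕ := d.1.natAbs + d.2.natAbs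

theorem natAbs_mul_sub_mul_le (a b : ℤ) (e : ℤ × ℤ) :
    (b * e.1 - a * e.2).natAbs ≤ l1 (a, b) * l1 e := by
  have := Int.natAbs_sub_le (b * e.1) (a * e.2)
  simp only [Int.natAbs_mul] at this
  simp only [l1]
  nlinarith [Nat.zero_le (a.natAbs * e.1.natAbs), Nat.zero_le (b.natAbs * e.2.natAbs)]

section Blocks

variable {rounds : ℕ → ℕ}

noncomputable def roundOf (rounds : ℕ → ℕ) (n : ℕ) : ℕ := sInf {r | n ≤ rounds (r + 1)}

theorem le_rounds_roundOf_succ (hr : StrictMono rounds) (n : ℕ) :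
    n ≤ rounds (roundOf rounds n + 1) :=
  Nat.sInf_mem (s := {r | n ≤ rounds (r + 1)}) ⟨n, (Nat.le_succ n).trans (hr.id_le (n + 1))⟩

theorem roundOf_le {n r : ℕ} (h : n ≤ rounds (r + 1)) : roundOf rounds n ≤ r :=
  Nat.sInf_le h

theorem le_rounds_of_roundOf_lt (hr : StrictMono rounds) {n r : ℕ} (h : roundOf rounds n < r) :
    n ≤ rounds r :=
  (le_rounds_roundOf_succ hr n).trans (hr.monotone h)

/-- On the block `(rounds r, rounds (r + 1)]` (for `r = 0`: `[0, rounds 1]`) the pair is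
`w n • (-(d r).2, (d r).1)`, so that `(d r).1 • x + (d r).2 • y` vanishes there. -/
noncomputable def blockPair (rounds : ℕ → ℕ) (d : ℕ → ℤ × ℤ) (w : ℕ → ℕ) : (ℕ → ℤ) × (ℕ → ℤ) :=
  (fun n => -(d (roundOf rounds n)).2 * w n, fun n => (d (roundOf rounds n)).1 * w n)

variable {d : ℕ → ℤ × ℤ} {w : ℕ → ℕ}

theorem le_natAbs_blockPair (hd : ∀ r, d r ≠ 0) (n : ℕ) :
    w n ≤ ((blockPair rounds d w).1 n).natAbs + ((blockPair rounds d w).2 n).natAbs := by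
  have hne := hd (roundOf rounds n)
  simp only [blockPair, Int.natAbs_mul, Int.natAbs_neg, Int.natAbs_natCast, ← add_mul]
  refine le_mul_of_one_le_left (Nat.zero_le _) ?_
  by_contra! h0
  exact hne (Prod.ext (Int.natAbs_eq_zero.1 (by omega)) (Int.natAbs_eq_zero.1 (by omega)))

theorem smul_blockPair_apply (a b : ℤ) (n : ℕ) :
    (a • (blockPair rounds d w).1 + b • (blockPair rounds d w).2) n =
      (b * (d (roundOf rounds n)).1 - a * (d (roundOf rounds n)).2) * w n := by
  simp only [blockPair, Pi.add_apply, Pi.smul_apply, smul_eq_mul]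
  ring

theorem maxAbs_smul_blockPair_le (hr : StrictMono rounds) (hw : Monotone w) {a b : ℤ} {r : ℕ}
    (hdr : d r = (a, b)) :
    maxAbs (a • (blockPair rounds d w).1 + b • (blockPair rounds d w).2) (rounds (r + 1)) ≤
      l1 (a, b) * (∑ r' ∈ Finset.range r, l1 (d r')) * w (rounds r) := by
  refine maxAbs_le_iff.2 fun n hn => ?_
  rw [smul_blockPair_apply, Int.natAbs_mul, Int.natAbs_natCast]
  rcases (roundOf_le hn).lt_or_eq with hlt | heq
  · refine Nat.mul_le_mul ?_ (hw (le_rounds_of_roundOf_lt hr hlt))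
    exact (natAbs_mul_sub_mul_le a b _).trans (Nat.mul_le_mul_left _
      (Finset.single_le_sum (f := fun r' => l1 (d r')) (fun _ _ => Nat.zero_le _)
        (Finset.mem_range.2 hlt)))
  · simp [heq, hdr, mul_comm]

theorem mul_maxAbs_smul_blockPair_add_le (hr : StrictMono rounds) (hw : Monotone w)
    {a b : ℤ} {h : ℕ → ℤ} {r K : ℕ} (hdr : d r = (a, b)) (hK : 2 * K * (l1 (a, b) + 1) ≤ r)
    (hlong : r * (∑ r' ∈ Finset.range r, l1 (d r')) * w (rounds r) ≤ rounds (r + 1))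
    (hh : r * maxAbs h (rounds (r + 1)) ≤ rounds (r + 1)) :
    K * maxAbs (a • (blockPair rounds d w).1 + b • (blockPair rounds d w).2 + h) (rounds (r + 1))
      ≤ rounds (r + 1) := by
  set D := ∑ r' ∈ Finset.range r, l1 (d r')
  have hab : 2 * K * l1 (a, b) ≤ r := by nlinarith
  have hK' : 2 * K ≤ r := by nlinarith
  calc K * maxAbs _ (rounds (r + 1))
      ≤ K * (l1 (a, b) * D * w (rounds r) + maxAbs h (rounds (r + 1))) :=
        Nat.mul_le_mul_left K ((maxAbs_add_le _ _ _).trans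
          (Nat.add_le_add_right (maxAbs_smul_blockPair_le hr hw hdr) _))
    _ ≤ rounds (r + 1) := by
      nlinarith [Nat.mul_le_mul_right (D * w (rounds r)) hab,
        Nat.mul_le_mul_right (maxAbs h (rounds (r + 1))) hK']

end Blocks

def pairGens {X : Type*} (P : Set (X × X)) : Set X := {g | ∃ p ∈ P, g = p.1 ∨ g = p.2}

theorem pairGens_mono {X : Type*} : Monotone (pairGens (X := X)) :=
  fun _ _ hPQ _ ⟨p, hp, hg⟩ => ⟨p, hPQ hp, hg⟩

theorem countable_pairGens {X : Type*} {P : Set (X × X)} (hP : P.Countable) :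
    (pairGens P).Countable :=
  ((hP.image Prod.fst).union (hP.image Prod.snd)).mono fun _ ⟨p, hp, hg⟩ =>
    hg.elim (fun h => Or.inl ⟨p, hp, h.symm⟩) fun h => Or.inr ⟨p, hp, h.symm⟩

theorem pairGens_insert {X : Type*} (p : X × X) (P : Set (X × X)) :
    pairGens (insert p P) = insert p.1 (insert p.2 (pairGens P)) := by
  ext g
  simp only [pairGens, mem_insert_iff, mem_ofPred_eq, exists_eq_or_imp, or_assoc]

theorem forall_mem_span_pairGens_iff {M : Type*} [AddCommGroup M] (Φ : M → Prop)
    (P : Set (M × M)) : (∀ g ∈ Submodule.span ℤ (pairGens P), Φ g) ↔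
      ∀ B : Finset (M × M), ↑B ⊆ P → ∀ g ∈ Submodule.span ℤ (pairGens (B : Set (M × M))), Φ g := by
  classical
  refine ⟨fun h B hB g hg => h g (Submodule.span_mono (pairGens_mono hB) hg), fun h g hg => ?_⟩
  obtain ⟨T, hTP, hgT⟩ := Submodule.mem_span_finite_of_mem_span hg
  choose! p hpP hp using fun t (ht : t ∈ T) => (hTP ht : ∃ p ∈ P, t = p.1 ∨ t = p.2)
  refine h (T.image p) (by simpa [subset_def] using hpP) g
    (Submodule.span_mono (fun t ht => ?_) hgT)
  exact ⟨p t, Finset.mem_image_of_mem p ht, hp t ht⟩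

open Submodule in
theorem exists_dominating_pair {S : Set (ℕ → ℤ)} (hS : S.Countable)
    (hS_sub : ∀ g ∈ span ℤ S, FrequentlySublinear g) (c : ℕ → ℕ) :
    ∃ x y : ℕ → ℤ, (∀ n, c n < (x n).natAbs + (y n).natAbs) ∧
      ∀ g ∈ span ℤ (insert x (insert y S)), FrequentlySublinear g := by
  have : Countable (span ℤ S) := by
    have := hS.to_subtype
    simpa using (inferInstance : Countable (span ℤ (range ((↑) : S → ℕ → ℤ))))
  have : Nonempty {d : ℤ × ℤ // d ≠ 0} := ⟨⟨(1, 0), by simp⟩⟩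
  -- Round `r` serves task `task r.unpair.1`, so every task is served at arbitrarily late rounds.
  obtain ⟨task, htask⟩ := exists_surjective_nat ({d : ℤ × ℤ // d ≠ 0} × span ℤ S)
  let d (r : ℕ) : ℤ × ℤ := (task r.unpair.1).1
  let h (r : ℕ) : ℕ → ℤ := (task r.unpair.1).2
  let D (r : ℕ) : ℕ := ∑ r' ∈ Finset.range r, l1 (d r')
  let w (n : ℕ) : ℕ := partialSups c n + 1
  have hpick (r prev : ℕ) : ∃ q, r * D r * w prev + prev < q ∧ r * maxAbs (h r) q ≤ q :=
    (hS_sub _ (task _).2.2 r).forall_exists_of_atTop _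
  choose pick hpick_gt hpick_small using hpick
  let rounds (r : ℕ) : ℕ := Nat.rec 0 (fun r prev => pick r prev) r
  have hrounds : StrictMono rounds :=
    strictMono_nat_of_lt_succ fun r => le_add_self.trans_lt (hpick_gt r (rounds r))
  refine ⟨(blockPair rounds d w).1, (blockPair rounds d w).2, fun n => ?_, fun g hg => ?_⟩
  · exact (Nat.lt_add_one_of_le (le_partialSups c n)).trans_le
      (le_natAbs_blockPair (w := w) (fun r => (task r.unpair.1).1.2) n)
  obtain ⟨a, z, hz, rfl⟩ := Submodule.mem_span_insert.1 hg
  obtain ⟨b, h₀, hh₀, rfl⟩ := Submodule.mem_span_insert.1 hz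
  by_cases hab : (a, b) = 0
  · obtain ⟨rfl, rfl⟩ := Prod.mk_eq_zero.1 hab
    simpa using hS_sub h₀ hh₀
  intro K
  refine frequently_atTop.2 fun N => ?_
  obtain ⟨k, hk⟩ := htask (⟨(a, b), hab⟩, ⟨h₀, hh₀⟩)
  set r := Nat.pair k (N + 2 * K * (l1 (a, b) + 1))
  have hr : N + 2 * K * (l1 (a, b) + 1) ≤ r := Nat.right_le_pair _ _
  have hdr : d r = (a, b) := by simp [d, r, hk]
  have hhr : h r = h₀ := by simp [h, r, hk]
  have hw : Monotone w := fun _ _ hmn => Nat.add_le_add_right ((partialSups c).monotone hmn) 1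
  refine ⟨rounds (r + 1), (le_self_add.trans hr).trans ((Nat.le_succ r).trans (hrounds.id_le _)),
    ?_⟩
  rw [← add_assoc]
  exact mul_maxAbs_smul_blockPair_add_le hrounds hw hdr ((Nat.le_add_left _ N).trans hr)
    ((Nat.le_add_right _ _).trans (hpick_gt r (rounds r)).le) (hhr ▸ hpick_small r (rounds r))

end BaireGroup

open BaireGroup Submodule in
/-- Assuming CH, there is a Menger-bounded subgroup of the Baire group `ℤ^ℕ`
whose square is not Menger-bounded. -/
theorem menger_bounded_group_with_non_menger_bounded_square
    (hCH : Cardinal.continuum = Cardinal.aleph 1) :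
    ∃ G : AddSubgroup (ℕ → ℤ),
      MengerBounded G ∧ ¬ MengerBounded (G × G) := by
  let T := (Cardinal.aleph.{0} 1).ord.ToType
  have hT (α : T) : (Iio α).Countable := by
    rw [← Cardinal.le_aleph0_iff_set_countable, ← Order.lt_succ_iff, Cardinal.succ_aleph0]
    simpa [T] using Cardinal.mk_Iio_lt α
  obtain ⟨e⟩ : Nonempty (T ≃ (ℕ → ℕ)) :=
    Cardinal.eq.1 (by simpa [T] using (Cardinal.lift_inj.1 (by simpa using hCH)).symm)
  obtain ⟨f, hf_dom, hf_sub⟩ := exists_family_of_finiteCharacter hT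
    (Good := fun P => ∀ g ∈ span ℤ (pairGens P), FrequentlySublinear g)
    (by simp [pairGens, frequentlySublinear_zero])
    (forall_mem_span_pairGens_iff _)
    (Q := fun α p => ∀ n, e α n < (p.1 n).natAbs + (p.2 n).natAbs)
    (fun α P hP hP_sub => by
      obtain ⟨x, y, hdom, hsub⟩ := exists_dominating_pair (countable_pairGens hP) hP_sub (e α)
      exact ⟨(x, y), hdom, by rwa [pairGens_insert]⟩)
  refine ⟨(span ℤ (pairGens (range f))).toAddSubgroup,
    mengerBounded_of_frequently_maxAbs_le _ fun g hg => by simpa using hf_sub g hg 1,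
    not_mengerBounded_prod _ fun c => ?_⟩
  obtain ⟨α, rfl⟩ := e.surjective c
  exact ⟨(f α).1, subset_span ⟨f α, mem_range_self α, Or.inl rfl⟩,
    (f α).2, subset_span ⟨f α, mem_range_self α, Or.inr rfl⟩, hf_dom α⟩
end

section
/- For every infinite cardinal κ with κ ≤ 2^ℵ₀, there exists an infinite almost disjoint family F of infinite subsets of ℕ such that a⁺(F) = κ, where a⁺(F) is the least possible cardinality of F⁺ \ F over all maximal almost disjoint families F⁺ extending F. -/
open Set Cardinal

/-- An almost disjoint family: a family of infinite subsets of `ℕ` any two distinct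
members of which have finite intersection. -/
def AlmostDisjointFamily (F : Set (Set ℕ)) : Prop :=
  (∀ A ∈ F, A.Infinite) ∧ ∀ A ∈ F, ∀ B ∈ F, A ≠ B → (A ∩ B).Finite

/-- A maximal almost disjoint (mad) family: an infinite almost disjoint family not
properly contained in any larger almost disjoint family. -/
def MadFamily (F : Set (Set ℕ)) : Prop :=
  AlmostDisjointFamily F ∧ F.Infinite ∧
    ∀ F' : Set (Set ℕ), AlmostDisjointFamily F' → F ⊆ F' → F' = F

/-- `a⁺(F)`: the least possible cardinality of `F⁺ \ F` over all mad families `F⁺`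
extending `F`. -/
noncomputable def aPlus (F : Set (Set ℕ)) : Cardinal :=
  sInf { c : Cardinal | ∃ F' : Set (Set ℕ), MadFamily F' ∧ F ⊆ F' ∧ #(↥(F' \ F)) = c }

/-!
Identify `ℕ` with the binary tree `2^{<ω}` and let `𝒜` be a maximal almost disjoint family of
infinite antichains of the tree. A set almost disjoint from every member of `𝒜` has no infinite
antichain; by Ramsey's theorem it is then partially well-ordered, so if it is infinite it contains
an infinite chain and meets some branch in an infinite set, while by compactness of `2^ω` it meets
only finitely many branches in an infinite set. Hence `𝒜` together with all branches is mad.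
For `S ⊆ 2^ω` of size `κ` with infinite complement, `F = 𝒜 ∪ {branch x | x ∉ S}` is extended to
that mad family by `κ` sets, and in any mad `F⁺ ⊇ F` every branch through a point of `S` meets some
member of `F⁺ \ F` infinitely, each member doing so for only finitely many branches; so
`|F⁺ \ F| ≥ κ`.
-/

universe u

theorem Set.partiallyWellOrderedOn_of_finite_antichains {α : Type*} {r : α → α → Prop}
    [IsPreorder α r] (hr : ∀ a, {b | r b a}.Finite) {s : Set α}
    (hs : ∀ t ⊆ s, IsAntichain r t → t.Finite) : s.PartiallyWellOrderedOn r := by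
  rw [partiallyWellOrderedOn_iff_exists_lt]
  intro f hf
  by_contra! hbad
  have hinj : f.Injective := by
    intro m n hmn
    by_contra hne
    rcases lt_or_gt_of_ne hne with h | h
    · exact hbad m n h (hmn ▸ refl _)
    · exact hbad n m h (hmn ▸ refl _)
  obtain ⟨g, hdesc | hanti⟩ := exists_increasing_or_nonincreasing_subseq (Function.swap r) f
  · exact infinite_of_injective_forall_mem (hinj.comp (g.injective.comp Nat.succ_injective))
      (fun n => hdesc 0 (n + 1) n.succ_pos) (hr (f (g 0)))
  · refine infinite_range_of_injective (hinj.comp g.injective)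
      (hs _ (range_subset_iff.2 fun n => hf (g n)) ?_)
    rintro _ ⟨m, rfl⟩ _ ⟨n, rfl⟩ hmn
    rcases lt_or_gt_of_ne (ne_of_apply_ne _ hmn) with h | h
    · exact hbad _ _ (g.strictMono h)
    · exact hanti _ _ h

theorem Cardinal.mk_le_of_forall_finite_fiber {α β : Type u} [Infinite α] (f : α → β)
    (hf : ∀ b, (f ⁻¹' {b}).Finite) : #α ≤ #β := by
  by_contra h
  obtain ⟨b, hb⟩ := exists_infinite_fiber f (not_le.1 h)
  exact (hf b).not_infinite (infinite_coe_iff.1 hb)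

theorem Cardinal.exists_set_mk_eq_and_compl_infinite {α : Type u} [Infinite α]
    {κ : Cardinal.{u}} (h : κ ≤ #α) : ∃ S : Set α, #S = κ ∧ Sᶜ.Infinite := by
  obtain ⟨e⟩ : Nonempty (α ⊕ α ≃ α) := Cardinal.eq.1 (by simp [add_eq_self (aleph0_le_mk α)])
  obtain ⟨S, rfl⟩ := le_mk_iff_exists_set.1 h
  refine ⟨e '' range (Sum.inl ∘ (↑) : S → α ⊕ α), ?_, ?_⟩
  · rw [mk_image_eq e.injective, mk_range_eq _ (Sum.inl_injective.comp Subtype.val_injective)]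
  · refine infinite_of_injective_forall_mem (e.injective.comp Sum.inr_injective) fun a => ?_
    simp

namespace CantorTree

noncomputable def node : ℕ ≃ List Bool := Classical.choice nonempty_equiv_of_countable

def TreeLE (m n : ℕ) : Prop := node m <+: node n

instance : IsPreorder ℕ TreeLE where
  refl _ := List.prefix_rfl
  trans _ _ _ := List.IsPrefix.trans

lemma finite_setOf_treeLE (n : ℕ) : {m | TreeLE m n}.Finite :=
  ((node n).inits.finite_toSet.preimage node.injective.injOn).subset fun m hm => by
    simpa [TreeLE] using hm

def seg (x : ℕ → Bool) (n : ℕ) : List Bool := List.ofFn fun i : Fin n => x i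

@[simp] lemma length_seg (x : ℕ → Bool) (n : ℕ) : (seg x n).length = n := by simp [seg]

@[simp] lemma getElem_seg (x : ℕ → Bool) {n i : ℕ} (h : i < (seg x n).length) :
    (seg x n)[i] = x i := by simp [seg]

lemma seg_injective (x : ℕ → Bool) : (seg x).Injective := fun m n h => by
  simpa using congrArg List.length h

lemma seg_prefix_seg (x : ℕ → Bool) {m n : ℕ} (h : m ≤ n) : seg x m <+: seg x n :=
  List.prefix_iff_eq_take.2 <| List.ext_getElem (by simp [h]) fun i _ _ => by simp

lemma not_seg_prefix_seg {x y : ℕ → Bool} {i m n : ℕ} (hm : i < m) (h : x i ≠ y i) :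
    ¬ seg x m <+: seg y n := fun hp => h <| by
  have := hp.getElem (i := i) (by simpa using hm)
  rwa [getElem_seg, getElem_seg] at this

lemma seg_eq_seg_iff {x y : ℕ → Bool} {n : ℕ} :
    seg x n = seg y n ↔ x ∈ PiNat.cylinder y n := by
  simp [seg, List.ofFn_inj, funext_iff, Fin.forall_iff]

def branch (x : ℕ → Bool) : Set ℕ := node ⁻¹' range (seg x)

lemma branch_infinite (x : ℕ → Bool) : (branch x).Infinite :=
  infinite_of_injective_forall_mem (node.symm.injective.comp (seg_injective x))
    fun k => ⟨k, by simp⟩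

lemma branch_inter_branch_finite {x y : ℕ → Bool} (h : x ≠ y) :
    (branch x ∩ branch y).Finite := by
  refine (((finite_Iic (PiNat.firstDiff x y)).image (seg x)).preimage
    node.injective.injOn).subset ?_
  rintro n ⟨⟨k, hk⟩, ⟨j, hj⟩⟩
  obtain rfl : k = j := by simpa using congrArg List.length (hk.trans hj.symm)
  exact ⟨k, (PiNat.mem_cylinder_iff_le_firstDiff h k).1 (seg_eq_seg_iff.1 (hk.trans hj.symm)), hk⟩

lemma branch_injective : Function.Injective branch := fun x y hxy => by
  by_contra h
  have := branch_inter_branch_finite h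
  rw [hxy, inter_self] at this
  exact branch_infinite y this

lemma _root_.IsAntichain.inter_branch_finite {A : Set ℕ} (hA : IsAntichain TreeLE A)
    (x : ℕ → Bool) : (A ∩ branch x).Finite := by
  refine Subsingleton.finite ?_
  rintro a ⟨ha, k, hk⟩ b ⟨hb, j, hj⟩
  rcases le_total k j with h | h
  · exact hA.eq ha hb (by rw [TreeLE, ← hk, ← hj]; exact seg_prefix_seg x h)
  · exact (hA.eq hb ha (by rw [TreeLE, ← hk, ← hj]; exact seg_prefix_seg x h)).symm

lemma _root_.IsChain.exists_subset_range_seg {C : Set (List Bool)} (hC : IsChain (· <+: ·) C)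
    (hinf : C.Infinite) : ∃ x, C ⊆ range (seg x) := by
  have hlen : ∀ i, ∃ l ∈ C, i < l.length := by
    have hinj : InjOn List.length C := fun a ha b hb h => by
      rcases hC.total ha hb with h' | h'
      exacts [h'.eq_of_length h, (h'.eq_of_length h.symm).symm]
    intro i
    obtain ⟨_, ⟨l, hl, rfl⟩, hi⟩ := ((infinite_image_iff hinj).2 hinf).exists_gt i
    exact ⟨l, hl, hi⟩
  choose l hlC hl using hlen
  refine ⟨fun i => (l i)[i]'(hl i), fun a ha => ⟨a.length, List.ext_getElem (by simp) ?_⟩⟩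
  intro i _ hi
  rw [getElem_seg]
  rcases hC.total (hlC i) ha with h | h
  exacts [h.getElem (hl i), (h.getElem hi).symm]

lemma _root_.Set.PartiallyWellOrderedOn.exists_inter_branch_infinite {E : Set ℕ}
    (hE : E.PartiallyWellOrderedOn TreeLE) (hinf : E.Infinite) :
    ∃ x, (E ∩ branch x).Infinite := by
  set f := hinf.natEmbedding E
  obtain ⟨g, hg⟩ := hE.exists_monotone_subseq (f := fun n => (f n : ℕ)) fun n => (f n).2
  have hu : Function.Injective fun n => (f (g n) : ℕ) :=
    Subtype.val_injective.comp (f.injective.comp g.injective)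
  have hchain : IsChain (· <+: ·) (range fun n => node (f (g n))) := by
    rintro _ ⟨m, rfl⟩ _ ⟨n, rfl⟩ -
    rcases le_total m n with h | h
    exacts [Or.inl (hg m n h), Or.inr (hg n m h)]
  obtain ⟨x, hx⟩ :=
    hchain.exists_subset_range_seg (infinite_range_of_injective (node.injective.comp hu))
  refine ⟨x, (infinite_range_of_injective hu).mono ?_⟩
  rintro _ ⟨n, rfl⟩
  exact ⟨(f (g n)).2, hx ⟨n, rfl⟩⟩

lemma exists_strictMono_firstDiff {B : Set (ℕ → Bool)} (hB : B.Infinite) :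
    ∃ y, ∃ z : ℕ → ℕ → Bool, (∀ k, z k ∈ B ∧ z k ≠ y) ∧
      StrictMono fun k => PiNat.firstDiff (z k) y := by
  obtain ⟨y, hy⟩ := hB.exists_accPt_principal
  have hclose : ∀ n, ∃ x ∈ B, x ≠ y ∧ n ≤ PiNat.firstDiff x y := fun n => by
    obtain ⟨x, ⟨hxy, hxB⟩, hne⟩ := accPt_iff_nhds.1 hy _
      ((PiNat.isOpen_cylinder _ y n).mem_nhds (PiNat.self_mem_cylinder y n))
    exact ⟨x, hxB, hne, (PiNat.mem_cylinder_iff_le_firstDiff hne n).1 hxy⟩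
  choose x hxB hxy hxn using hclose
  set n : ℕ → ℕ := fun k => (fun m => PiNat.firstDiff (x m) y + 1)^[k] 0
  refine ⟨y, x ∘ n, fun k => ⟨hxB _, hxy _⟩, strictMono_nat_of_lt_succ fun k => ?_⟩
  have hnext : n (k + 1) = PiNat.firstDiff (x (n k)) y + 1 := Function.iterate_succ_apply' _ _ _
  calc PiNat.firstDiff (x (n k)) y < n (k + 1) := by rw [hnext]; exact Nat.lt_succ_self _
    _ ≤ _ := hxn _

lemma exists_seg_mem_of_inter_branch_infinite {E : Set ℕ} {x : ℕ → Bool}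
    (h : (E ∩ branch x).Infinite) (d : ℕ) : ∃ k, d < k ∧ node.symm (seg x k) ∈ E := by
  have hinf : {k | node.symm (seg x k) ∈ E}.Infinite := fun hfin =>
    h <| (hfin.image fun k => node.symm (seg x k)).subset fun n ⟨hnE, k, hk⟩ =>
      ⟨k, by simpa [hk] using hnE, by simp [hk]⟩
  obtain ⟨k, hk, hdk⟩ := hinf.exists_gt d
  exact ⟨k, hdk, hk⟩

lemma _root_.Set.PartiallyWellOrderedOn.finite_setOf_inter_branch_infinite {E : Set ℕ}
    (hE : E.PartiallyWellOrderedOn TreeLE) : {x | (E ∩ branch x).Infinite}.Finite := by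
  by_contra hB
  obtain ⟨y, z, hz, hmono⟩ := exists_strictMono_firstDiff hB
  choose k hk hkE using fun j =>
    exists_seg_mem_of_inter_branch_infinite (hz j).1 (PiNat.firstDiff (z j) y)
  set e : ℕ → ℕ := fun j => node.symm (seg (z j) (k j))
  -- `e i` and `e j` already differ at the point where `z i` leaves `y`.
  have hsplit : ∀ i j, i < j → ¬ TreeLE (e i) (e j) ∧ ¬ TreeLE (e j) (e i) := by
    intro i j hij
    simp only [TreeLE, e, Equiv.apply_symm_apply]
    have hne : z i (PiNat.firstDiff (z i) y) ≠ z j (PiNat.firstDiff (z i) y) := by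
      rw [PiNat.apply_eq_of_lt_firstDiff (hmono hij)]
      exact PiNat.apply_firstDiff_ne (hz i).2
    exact ⟨not_seg_prefix_seg (hk i) hne, not_seg_prefix_seg ((hmono hij).trans (hk j)) hne.symm⟩
  have hanti : IsAntichain TreeLE (range e) := by
    rintro _ ⟨i, rfl⟩ _ ⟨j, rfl⟩ hij
    rcases lt_or_gt_of_ne (ne_of_apply_ne e hij) with h | h
    exacts [(hsplit i j h).1, (hsplit j i h).2]
  refine (infinite_range_of_injective fun i j hij => ?_)
    (hanti.finite_of_partiallyWellOrderedOn (hE.mono (range_subset_iff.2 hkE)))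
  by_contra hne
  rcases lt_or_gt_of_ne hne with h | h
  · exact (hsplit i j h).1 (hij ▸ refl _)
  · exact (hsplit j i h).1 (hij ▸ refl _)

end CantorTree

open CantorTree

namespace AlmostDisjointFamily

variable {F G : Set (Set ℕ)}

lemma union (hF : AlmostDisjointFamily F) (hG : AlmostDisjointFamily G)
    (hFG : ∀ A ∈ F, ∀ B ∈ G, (A ∩ B).Finite) : AlmostDisjointFamily (F ∪ G) := by
  refine ⟨fun A hA => hA.elim (hF.1 A) (hG.1 A), ?_⟩
  rintro A (hA | hA) B (hB | hB) hAB
  · exact hF.2 A hA B hB hAB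
  · exact hFG A hA B hB
  · exact inter_comm A B ▸ hFG B hB A hA
  · exact hG.2 A hA B hB hAB

lemma insert (hF : AlmostDisjointFamily F) {B : Set ℕ} (hB : B.Infinite)
    (hBF : ∀ A ∈ F, (B ∩ A).Finite) : AlmostDisjointFamily (insert B F) := by
  rw [insert_eq]
  refine AlmostDisjointFamily.union ⟨?_, ?_⟩ hF fun A hA => ?_
  · simpa using hB
  · simp
  · rw [mem_singleton_iff.1 hA]
    exact hBF

end AlmostDisjointFamily

lemma madFamily_iff {F : Set (Set ℕ)} : MadFamily F ↔
    AlmostDisjointFamily F ∧ F.Infinite ∧ ∀ B : Set ℕ, B.Infinite → ∃ A ∈ F, (B ∩ A).Infinite := by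
  refine and_congr_right fun hF => and_congr_right fun _ =>
    ⟨fun hmax B hB => ?_, fun h F' hF' hsub => ?_⟩
  · by_contra! hfin
    have hBF : B ∈ F := hmax _ (hF.insert hB hfin) (subset_insert B F) ▸ mem_insert B F
    exact hB (inter_self B ▸ hfin B hBF)
  · refine subset_antisymm (fun E hE => ?_) hsub
    obtain ⟨A, hA, hEA⟩ := h E (hF'.1 E hE)
    by_contra hEF
    exact hEA (hF'.2 E hE A (hsub hA) fun h => hEF (h ▸ hA))

lemma exists_almostDisjointFamily_maximal (P : Set ℕ → Prop) :
    ∃ 𝒜, AlmostDisjointFamily 𝒜 ∧ (∀ A ∈ 𝒜, P A) ∧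
      ∀ B : Set ℕ, B.Infinite → P B → (∀ A ∈ 𝒜, (B ∩ A).Finite) → B ∈ 𝒜 := by
  have hchains : ∀ c ⊆ {𝒜 | AlmostDisjointFamily 𝒜 ∧ ∀ A ∈ 𝒜, P A}, IsChain (· ⊆ ·) c →
      AlmostDisjointFamily (⋃₀ c) := by
    refine fun c hc hchain => ⟨fun A ⟨s, hs, hA⟩ => (hc hs).1.1 A hA, ?_⟩
    rintro A ⟨s, hs, hA⟩ B ⟨t, ht, hB⟩ hAB
    rcases hchain.total hs ht with h | h
    exacts [(hc ht).1.2 A (h hA) B hB hAB, (hc hs).1.2 A hA B (h hB) hAB]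
  obtain ⟨𝒜, ⟨h𝒜, hP⟩, hmax⟩ := zorn_subset {𝒜 | AlmostDisjointFamily 𝒜 ∧ ∀ A ∈ 𝒜, P A}
    fun c hc hchain => ⟨⋃₀ c, ⟨hchains c hc hchain, fun A ⟨s, hs, hA⟩ => (hc hs).2 A hA⟩,
      fun s hs => subset_sUnion_of_mem hs⟩
  exact ⟨𝒜, h𝒜, hP, fun B hB hPB hBF =>
    hmax ⟨h𝒜.insert hB hBF, forall_mem_insert.2 ⟨hPB, hP⟩⟩ (subset_insert B 𝒜) (mem_insert B 𝒜)⟩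

lemma aPlus_eq {F : Set (Set ℕ)} {κ : Cardinal}
    (hex : ∃ F', MadFamily F' ∧ F ⊆ F' ∧ #(↥(F' \ F)) = κ)
    (hle : ∀ F', MadFamily F' → F ⊆ F' → κ ≤ #(↥(F' \ F))) : aPlus F = κ :=
  le_antisymm (csInf_le' hex)
    (le_csInf ⟨κ, hex⟩ fun _ ⟨F', hF', hsub, hc⟩ => hc ▸ hle F' hF' hsub)

lemma exists_almostDisjointFamily_antichains : ∃ 𝒜 : Set (Set ℕ), AlmostDisjointFamily 𝒜 ∧
    (∀ A ∈ 𝒜, IsAntichain TreeLE A) ∧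
    ∀ E : Set ℕ, (∀ A ∈ 𝒜, (E ∩ A).Finite) → E.PartiallyWellOrderedOn TreeLE := by
  obtain ⟨𝒜, h𝒜, hanti, hmax⟩ := exists_almostDisjointFamily_maximal (IsAntichain TreeLE)
  refine ⟨𝒜, h𝒜, hanti, fun E hE =>
    partiallyWellOrderedOn_of_finite_antichains finite_setOf_treeLE fun A hAE hA => ?_⟩
  by_contra hinf
  have hA𝒜 := hmax A hinf hA fun B hB => (hE B hB).subset (inter_subset_inter_left B hAE)
  exact hinf ((hE A hA𝒜).subset (subset_inter hAE subset_rfl))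

section Construction

variable {𝒜 : Set (Set ℕ)}

lemma almostDisjointFamily_union_image_branch (h𝒜 : AlmostDisjointFamily 𝒜)
    (hanti : ∀ A ∈ 𝒜, IsAntichain TreeLE A) (T : Set (ℕ → Bool)) :
    AlmostDisjointFamily (𝒜 ∪ branch '' T) :=
  h𝒜.union ⟨forall_mem_image.2 fun x _ => branch_infinite x,
      forall_mem_image.2 fun _ _ => forall_mem_image.2 fun _ _ hxy =>
        branch_inter_branch_finite fun h => hxy (h ▸ rfl)⟩
    fun A hA => forall_mem_image.2 fun x _ => (hanti A hA).inter_branch_finite x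

lemma madFamily_union_range_branch (h𝒜 : AlmostDisjointFamily 𝒜)
    (hanti : ∀ A ∈ 𝒜, IsAntichain TreeLE A)
    (hpwo : ∀ E : Set ℕ, (∀ A ∈ 𝒜, (E ∩ A).Finite) → E.PartiallyWellOrderedOn TreeLE) :
    MadFamily (𝒜 ∪ range branch) := by
  refine madFamily_iff.2 ⟨image_univ ▸ almostDisjointFamily_union_image_branch h𝒜 hanti univ,
    (infinite_range_of_injective branch_injective).mono subset_union_right, fun B hB => ?_⟩
  by_cases h : ∃ A ∈ 𝒜, (B ∩ A).Infinite
  · obtain ⟨A, hA, hBA⟩ := h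
    exact ⟨A, Or.inl hA, hBA⟩
  · push Not at h
    obtain ⟨x, hx⟩ := (hpwo B h).exists_inter_branch_infinite hB
    exact ⟨branch x, Or.inr ⟨x, rfl⟩, hx⟩

lemma union_range_branch_diff (hanti : ∀ A ∈ 𝒜, IsAntichain TreeLE A) (S : Set (ℕ → Bool)) :
    (𝒜 ∪ range branch) \ (𝒜 ∪ branch '' Sᶜ) = branch '' S := by
  ext E
  constructor
  · rintro ⟨hE | ⟨x, rfl⟩, hEF⟩
    · exact absurd (Or.inl hE) hEF
    · exact ⟨x, not_not.1 fun hx => hEF (Or.inr ⟨x, hx, rfl⟩), rfl⟩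
  · rintro ⟨x, hx, rfl⟩
    refine ⟨Or.inr ⟨x, rfl⟩, ?_⟩
    rintro (h | ⟨y, hy, hyx⟩)
    · exact branch_infinite x (inter_self (branch x) ▸ (hanti _ h).inter_branch_finite x)
    · exact hy (branch_injective hyx ▸ hx)

lemma le_mk_diff_union_image_branch (hanti : ∀ A ∈ 𝒜, IsAntichain TreeLE A)
    (hpwo : ∀ E : Set ℕ, (∀ A ∈ 𝒜, (E ∩ A).Finite) → E.PartiallyWellOrderedOn TreeLE)
    {S : Set (ℕ → Bool)} (hS : S.Infinite) {F' : Set (Set ℕ)} (hF' : MadFamily F')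
    (hsub : 𝒜 ∪ branch '' Sᶜ ⊆ F') : #S ≤ #(↥(F' \ (𝒜 ∪ branch '' Sᶜ))) := by
  set F := 𝒜 ∪ branch '' Sᶜ
  have hmeet : ∀ x ∈ S, ∃ E ∈ F' \ F, (E ∩ branch x).Infinite := by
    intro x hx
    obtain ⟨E, hE, hxE⟩ := (madFamily_iff.1 hF').2.2 _ (branch_infinite x)
    rw [inter_comm] at hxE
    refine ⟨E, ⟨hE, ?_⟩, hxE⟩
    rintro (hE𝒜 | ⟨y, hy, rfl⟩)
    · exact hxE ((hanti E hE𝒜).inter_branch_finite x)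
    · exact hxE (branch_inter_branch_finite fun h => hy (h ▸ hx))
  choose φ hφ hφx using hmeet
  have hpwo' : ∀ E ∈ F' \ F, E.PartiallyWellOrderedOn TreeLE := fun E hE =>
    hpwo E fun A hA => hF'.1.2 E hE.1 A (hsub (Or.inl hA)) fun h => hE.2 (Or.inl (h ▸ hA))
  have := hS.to_subtype
  refine mk_le_of_forall_finite_fiber (fun x : S => (⟨φ x x.2, hφ x x.2⟩ : ↥(F' \ F)))
    fun E => ?_
  refine ((hpwo' E E.2).finite_setOf_inter_branch_infinite.preimage
    Subtype.val_injective.injOn).subset ?_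
  rintro x rfl
  exact hφx x x.2

end Construction

/-- Every infinite cardinal `κ ≤ 2^ℵ₀` is of the form `a⁺(F)` for some infinite almost
disjoint family `F`. -/
theorem exists_almostDisjointFamily_aPlus_eq (κ : Cardinal)
    (hκ : Cardinal.aleph0 ≤ κ) (hκc : κ ≤ Cardinal.continuum) :
    ∃ F : Set (Set ℕ), AlmostDisjointFamily F ∧ F.Infinite ∧ aPlus F = κ := by
  obtain ⟨𝒜, h𝒜, hanti, hpwo⟩ := exists_almostDisjointFamily_antichains
  obtain ⟨S, hSκ, hSc⟩ :=
    exists_set_mk_eq_and_compl_infinite (α := ℕ → Bool) (by simpa using hκc)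
  have hS : S.Infinite := infinite_coe_iff.1 (Cardinal.infinite_iff.2 (hSκ ▸ hκ))
  refine ⟨𝒜 ∪ branch '' Sᶜ, almostDisjointFamily_union_image_branch h𝒜 hanti _,
    (hSc.image branch_injective.injOn).mono subset_union_right, aPlus_eq ?_ ?_⟩
  · refine ⟨_, madFamily_union_range_branch h𝒜 hanti hpwo,
      union_subset_union_right _ (image_subset_range _ _), ?_⟩
    rw [union_range_branch_diff hanti, mk_image_eq branch_injective, hSκ]
  · exact fun F' hF' hsub => hSκ ▸ le_mk_diff_union_image_branch hanti hpwo hS hF' hsub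
end

section
/- Let X be a Tychonoff space. If the space C_p(X) of continuous real-valued functions on X with the topology of pointwise convergence has the Pytkeev property, then X is zero-dimensional. -/
/-!
Separate a point `x` from the complement of an open `U ∋ x` by `g : X → [0,1]`. If `g` omits a
value `r ∈ (0,1)`, then `{g < r}` is a clopen neighbourhood of `x` inside `U`. Otherwise consider
the nonzero functions `b ∘ g`, where `b` vanishes within `1/n²` of a finite set `S` of at most `n`
points of the grid of mesh `1/n²`, and `b ≥ 1` farther than `2/n²` from `S`. The zero function is
in their closure. For an infinite family `N` of them, the set of `t ∈ (0,1)` such that every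
member of `N` is `< 1` at a `g`-preimage of `t` is Lebesgue null: only finitely many of these
functions have level `n` below any given bound, and `{b < 1}` has measure `≤ 4/n`. So a
countable π-network at `0` cannot meet all neighbourhoods `{f | f (x_t) < 1}`, `t ∈ (0,1)`.
-/

open Set Filter Topology

/-- `Cp X`: the space of continuous real-valued functions on `X` with the topology of
pointwise convergence (subspace of the product `ℝ^X`). -/
def Cp (X : Type*) [TopologicalSpace X] : Type _ := {f : X → ℝ // Continuous f}

instance (X : Type*) [TopologicalSpace X] : TopologicalSpace (Cp X) :=
  instTopologicalSpaceSubtype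

/-- The Pytkeev property: for every point `y` in `closure A \ A` there is a countable
family of infinite subsets of `A` forming a π-network at `y`. -/
def PytkeevProperty (Y : Type*) [TopologicalSpace Y] : Prop :=
  ∀ (y : Y) (A : Set Y), y ∈ closure A \ A →
    ∃ 𝒩 : Set (Set Y), 𝒩.Countable ∧ (∀ N ∈ 𝒩, N ⊆ A ∧ N.Infinite) ∧
      ∀ U : Set Y, IsOpen U → y ∈ U → ∃ N ∈ 𝒩, N ⊆ U

/-- A space is zero-dimensional if it has a basis consisting of clopen sets. -/
def ZeroDimensional (X : Type*) [TopologicalSpace X] : Prop :=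
  ∃ B : Set (Set X), (∀ U ∈ B, IsClopen U) ∧ TopologicalSpace.IsTopologicalBasis B

open MeasureTheory

section Bump

variable {α : Type*} [PseudoMetricSpace α]

noncomputable def bump (r : ℝ) (S : Set α) (x : α) : ℝ :=
  max 0 (Metric.infDist x S / r - 1)

theorem continuous_bump (r : ℝ) (S : Set α) : Continuous (bump r S) :=
  continuous_const.max (((Metric.continuous_infDist_pt S).div_const r).sub continuous_const)

theorem bump_eq_zero {r : ℝ} {S : Set α} {x : α} (hr : 0 < r) (h : Metric.infDist x S ≤ r) :
    bump r S x = 0 := by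
  have : Metric.infDist x S / r ≤ 1 := (div_le_one hr).2 h
  exact max_eq_left (by linarith)

theorem infDist_lt_of_bump_lt_one {r : ℝ} {S : Set α} {x : α} (hr : 0 < r)
    (h : bump r S x < 1) : Metric.infDist x S < 2 * r := by
  have : Metric.infDist x S / r - 1 < 1 := (max_lt_iff.1 h).2
  rwa [sub_lt_iff_lt_add, one_add_one_eq_two, div_lt_iff₀ hr] at this

end Bump

theorem volume_setOf_bump_lt_one_le {r : ℝ} {S : Finset ℝ} (hr : 0 < r) (hS : S.Nonempty) :
    volume {t | bump r (S : Set ℝ) t < 1} ≤ S.card * ENNReal.ofReal (4 * r) := by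
  have hcover : {t | bump r (S : Set ℝ) t < 1} ⊆ ⋃ s ∈ S, Metric.ball s (2 * r) := by
    intro t ht
    obtain ⟨s, hs, hts⟩ :=
      (Metric.infDist_lt_iff (Finset.coe_nonempty.2 hS)).1 (infDist_lt_of_bump_lt_one hr ht)
    exact mem_biUnion hs hts
  calc volume {t | bump r (S : Set ℝ) t < 1}
      ≤ ∑ s ∈ S, volume (Metric.ball s (2 * r)) :=
        (measure_mono hcover).trans (measure_biUnion_finset_le _ _)
    _ = S.card * ENNReal.ofReal (4 * r) := by
        simp only [Real.volume_ball, Finset.sum_const, nsmul_eq_mul]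
        ring_nf

noncomputable def grid (k : ℕ) : Finset ℝ :=
  (Finset.range (k + 1)).image fun i : ℕ => (i : ℝ) / k

theorem floor_mul_div_mem_grid {t : ℝ} (ht : t ∈ Icc (0 : ℝ) 1) (k : ℕ) :
    (⌊t * k⌋₊ : ℝ) / k ∈ grid k := by
  refine Finset.mem_image.2 ⟨⌊t * k⌋₊, Finset.mem_range.2 (Nat.lt_succ_of_le ?_), rfl⟩
  exact Nat.floor_le_of_le (by nlinarith [ht.1, ht.2, (k.cast_nonneg : (0 : ℝ) ≤ k)])

theorem dist_floor_mul_div_le {t : ℝ} (ht : 0 ≤ t) {k : ℕ} (hk : 0 < k) :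
    dist t ((⌊t * k⌋₊ : ℝ) / k) ≤ 1 / k := by
  have hk' : (0 : ℝ) < k := by exact_mod_cast hk
  have hle : (⌊t * k⌋₊ : ℝ) / k ≤ t := (div_le_iff₀ hk').2 (Nat.floor_le (by positivity))
  have hlt : t < (⌊t * k⌋₊ + 1 : ℝ) / k := (lt_div_iff₀ hk').2 (Nat.lt_floor_add_one _)
  rw [add_div] at hlt
  rw [Real.dist_eq, abs_le]
  constructor <;> linarith

def admissible : Set (ℕ × Finset ℝ) :=
  {p | p.2 ⊆ grid (p.1 ^ 2) ∧ p.2.card ≤ p.1 ∧ p.2.Nonempty}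

noncomputable def levelBump (p : ℕ × Finset ℝ) : ℝ → ℝ :=
  bump (1 / (p.1 ^ 2 : ℕ)) p.2

theorem one_le_of_mem_admissible {p : ℕ × Finset ℝ} (hp : p ∈ admissible) : 1 ≤ p.1 :=
  hp.2.2.card_pos.trans_le hp.2.1

theorem volume_setOf_levelBump_lt_one_le {p : ℕ × Finset ℝ} (hp : p ∈ admissible) :
    volume {t | levelBump p t < 1} ≤ ENNReal.ofReal (4 / p.1) := by
  have hn : (0 : ℝ) < p.1 := by exact_mod_cast one_le_of_mem_admissible hp
  calc volume {t | levelBump p t < 1}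
      ≤ p.2.card * ENNReal.ofReal (4 * (1 / (p.1 ^ 2 : ℕ))) :=
        volume_setOf_bump_lt_one_le
          (one_div_pos.2 (by exact_mod_cast pow_pos (one_le_of_mem_admissible hp) 2)) hp.2.2
    _ ≤ p.1 * ENNReal.ofReal (4 * (1 / (p.1 ^ 2 : ℕ))) := by gcongr; exact hp.2.1
    _ = ENNReal.ofReal (4 / p.1) := by
        rw [← ENNReal.ofReal_natCast, ← ENNReal.ofReal_mul hn.le]
        congr 1
        push_cast
        field_simp

theorem finite_setOf_admissible_fst_lt (M : ℕ) : {p ∈ admissible | p.1 < M}.Finite := by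
  refine (Set.finite_Iio M).biUnion (fun n _ => (grid (n ^ 2)).powerset.finite_toSet.image
    (Prod.mk n)) |>.subset ?_
  rintro ⟨n, S⟩ ⟨hp, hn⟩
  exact mem_biUnion hn ⟨S, Finset.mem_coe.2 (Finset.mem_powerset.2 hp.1), rfl⟩

theorem exists_admissible_levelBump_eq_zero (T : Finset ℝ) (hT : ∀ t ∈ T, t ∈ Icc (0 : ℝ) 1) :
    ∃ p ∈ admissible, 5 ≤ p.1 ∧ ∀ t ∈ T, levelBump p t = 0 := by
  -- `0` is added only to make the point set nonempty.
  set n := max (insert 0 T).card 5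
  have hk : 0 < n ^ 2 := by positivity
  set snap : ℝ → ℝ := fun t => (⌊t * (n ^ 2 : ℕ)⌋₊ : ℝ) / (n ^ 2 : ℕ)
  have hT0 : ∀ t ∈ insert 0 T, t ∈ Icc (0 : ℝ) 1 := by simpa using hT
  refine ⟨(n, (insert 0 T).image snap), ⟨?_, ?_, ?_⟩, le_max_right _ _, fun t ht => ?_⟩
  · intro s hs
    obtain ⟨t, ht, rfl⟩ := Finset.mem_image.1 hs
    exact floor_mul_div_mem_grid (hT0 t ht) _
  · exact Finset.card_image_le.trans (le_max_left _ _)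
  · exact (Finset.insert_nonempty _ _).image _
  · refine bump_eq_zero (by positivity) ((Metric.infDist_le_dist_of_mem ?_).trans
      (dist_floor_mul_div_le (hT t ht).1 hk))
    exact Finset.mem_coe.2 (Finset.mem_image_of_mem _ (Finset.mem_insert_of_mem ht))

theorem exists_mem_Ioo_one_le_levelBump {p : ℕ × Finset ℝ} (hp : p ∈ admissible)
    (h5 : 5 ≤ p.1) : ∃ t ∈ Ioo (0 : ℝ) 1, 1 ≤ levelBump p t := by
  by_contra! h
  have hsmall : ENNReal.ofReal (4 / p.1) < 1 := by
    rw [ENNReal.ofReal_lt_one, div_lt_one (by positivity)]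
    exact_mod_cast h5
  refine (measure_mono h).trans (volume_setOf_levelBump_lt_one_le hp) |>.not_gt ?_
  simpa [Real.volume_Ioo] using hsmall

theorem volume_setOf_forall_levelBump_lt_one_eq_zero {P : Set (ℕ × Finset ℝ)}
    (hP : P ⊆ admissible) (hunbdd : ∀ M, ∃ p ∈ P, M ≤ p.1) :
    volume {t | ∀ p ∈ P, levelBump p t < 1} = 0 := by
  have htendsto : Tendsto (fun M : ℕ => ENNReal.ofReal (4 / (M + 1 : ℕ))) atTop (𝓝 0) := by
    simpa using ENNReal.tendsto_ofReal
      ((tendsto_const_div_atTop_nhds_zero_nat (4 : ℝ)).comp (tendsto_add_atTop_nat 1))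
  refine le_antisymm (ge_of_tendsto' htendsto fun M => ?_) zero_le
  obtain ⟨p, hp, hM⟩ := hunbdd (M + 1)
  calc volume {t | ∀ p ∈ P, levelBump p t < 1}
      ≤ volume {t | levelBump p t < 1} := measure_mono fun t ht => ht p hp
    _ ≤ ENNReal.ofReal (4 / p.1) := volume_setOf_levelBump_lt_one_le (hP hp)
    _ ≤ ENNReal.ofReal (4 / (M + 1 : ℕ)) :=
        ENNReal.ofReal_le_ofReal (div_le_div_of_nonneg_left (by norm_num) (by positivity)
          (by exact_mod_cast hM))

theorem exists_fst_le_of_infinite {β γ : Type*} {P : Set (ℕ × β)}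
    (hP : ∀ M, {p ∈ P | p.1 < M}.Finite) {q : ℕ × β → γ} {N : Set γ} (hNP : N ⊆ q '' P)
    (hN : N.Infinite) (M : ℕ) : ∃ p ∈ P, M ≤ p.1 ∧ q p ∈ N := by
  by_contra! h
  refine hN (((hP M).image q).subset fun a ha => ?_)
  obtain ⟨p, hp, rfl⟩ := hNP ha
  exact ⟨p, ⟨hp, not_le.1 fun hM => h p hp hM ha⟩, rfl⟩

theorem Cp.continuous_eval {X : Type*} [TopologicalSpace X] (x : X) :
    Continuous fun f : Cp X => f.1 x :=
  (continuous_apply x).comp (continuous_subtype_val (p := Continuous))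

theorem Cp.mem_closure_of_forall_finset {X : Type*} [TopologicalSpace X] {A : Set (Cp X)}
    {f : Cp X} (h : ∀ F : Finset X, ∃ a ∈ A, ∀ x ∈ F, a.1 x = f.1 x) : f ∈ closure A := by
  refine closure_subtype.2 (mem_closure_iff_nhds.2 fun W hW => ?_)
  rw [nhds_pi, Filter.mem_pi'] at hW
  obtain ⟨F, V, hV, hVW⟩ := hW
  obtain ⟨a, ha, haf⟩ := h F
  exact ⟨a.1, hVW fun x hx => haf x hx ▸ mem_of_mem_nhds (hV x), mem_image_of_mem _ ha⟩

theorem PytkeevProperty.exists_infinite_measure_setOf_subset_ne_zero {Y ι : Type*}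
    [TopologicalSpace Y] [MeasurableSpace ι] (hY : PytkeevProperty Y) {y : Y} {A : Set Y}
    (hy : y ∈ closure A \ A) {μ : Measure ι} (hμ : μ ≠ 0) {U : ι → Set Y}
    (hU : ∀ i, IsOpen (U i)) (hyU : ∀ i, y ∈ U i) :
    ∃ N ⊆ A, N.Infinite ∧ μ {i | N ⊆ U i} ≠ 0 := by
  obtain ⟨𝒩, h𝒩, h𝒩A, hnet⟩ := hY y A hy
  by_contra! hnull
  have hcover : (⋃ N ∈ 𝒩, {i | N ⊆ U i}) ≠ univ := fun h => by
    refine Measure.measure_univ_ne_zero.2 hμ ?_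
    rw [← h]
    exact (measure_biUnion_null_iff h𝒩).2 fun N hN => hnull N (h𝒩A N hN).1 (h𝒩A N hN).2
  obtain ⟨i, hi⟩ := (ne_univ_iff_exists_notMem _).1 hcover
  obtain ⟨N, hN, hNU⟩ := hnet (U i) (hU i) (hyU i)
  exact hi (mem_biUnion hN hNU)

section LevelBumpCp

open Function

variable {X : Type*} [TopologicalSpace X] {g : X → ℝ}

noncomputable def levelBumpCp (hg : Continuous g) (p : ℕ × Finset ℝ) : Cp X :=
  ⟨levelBump p ∘ g, (continuous_bump _ _).comp hg⟩

theorem zero_mem_closure_levelBumpCp (hg : Continuous g) (hg01 : ∀ x, g x ∈ Icc (0 : ℝ) 1)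
    (hrange : Ioo 0 1 ⊆ range g) :
    (⟨0, continuous_const⟩ : Cp X) ∈
      closure (levelBumpCp hg '' admissible \ {⟨0, continuous_const⟩}) := by
  refine Cp.mem_closure_of_forall_finset fun F => ?_
  obtain ⟨p, hp, h5, hzero⟩ :=
    exists_admissible_levelBump_eq_zero (F.image g) (by simpa using fun x _ => hg01 x)
  obtain ⟨t, ht, hone⟩ := exists_mem_Ioo_one_le_levelBump hp h5
  obtain ⟨x, rfl⟩ := hrange ht
  refine ⟨levelBumpCp hg p, ⟨mem_image_of_mem _ hp, fun h0 => ?_⟩,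
    fun z hz => hzero _ (Finset.mem_image_of_mem g hz)⟩
  have : levelBump p (g x) = 0 := congrArg (fun f : Cp X => f.1 x) h0
  linarith

theorem not_pytkeevProperty_of_Ioo_subset_range (hg : Continuous g)
    (hg01 : ∀ x, g x ∈ Icc (0 : ℝ) 1) (hrange : Ioo 0 1 ⊆ range g) :
    ¬ PytkeevProperty (Cp X) := by
  intro hY
  have : Nonempty X := range_nonempty_iff_nonempty.1 ⟨_, hrange ⟨one_half_pos, one_half_lt_one⟩⟩
  obtain ⟨N, hNA, hN, hUN⟩ := hY.exists_infinite_measure_setOf_subset_ne_zero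
    ⟨zero_mem_closure_levelBumpCp hg hg01 hrange, fun h => h.2 rfl⟩
    (μ := volume.restrict (Ioo 0 1)) (by simp) (U := fun t => {f | f.1 (invFun g t) < 1})
    (fun _ => isOpen_lt (Cp.continuous_eval _) continuous_const)
    fun _ => show (0 : ℝ) < 1 from one_pos
  rw [Measure.restrict_apply' measurableSet_Ioo] at hUN
  refine hUN (measure_mono_null ?_ (volume_setOf_forall_levelBump_lt_one_eq_zero
    (P := {p ∈ admissible | levelBumpCp hg p ∈ N}) (fun p hp => hp.1) fun M => ?_))
  · rintro t ⟨htN, ht⟩ p ⟨-, hpN⟩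
    have hlt : levelBump p (g (invFun g t)) < 1 := htN hpN
    rwa [invFun_eq (hrange ht)] at hlt
  · obtain ⟨p, hp, hM, hpN⟩ := exists_fst_le_of_infinite finite_setOf_admissible_fst_lt
      (fun f hf => (hNA hf).1) hN M
    exact ⟨p, ⟨hp, hpN⟩, hM⟩

end LevelBumpCp

theorem isClopen_preimage_Iio_of_notMem_range {X α : Type*} [TopologicalSpace X]
    [TopologicalSpace α] [LinearOrder α] [OrderClosedTopology α] {g : X → α} (hg : Continuous g)
    {r : α} (hr : r ∉ range g) : IsClopen (g ⁻¹' Iio r) := by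
  have hIic : g ⁻¹' Iio r = g ⁻¹' Iic r :=
    ext fun x => (le_iff_lt_or_eq.trans (or_iff_left fun h => hr ⟨x, h⟩)).symm
  exact ⟨hIic ▸ isClosed_Iic.preimage hg, isOpen_Iio.preimage hg⟩

theorem pytkeev_of_Cp_implies_zero_dimensional
    (X : Type*) [TopologicalSpace X] [T35Space X]
    (hPyt : PytkeevProperty (Cp X)) :
    ZeroDimensional X := by
  refine ⟨{W | IsClopen W}, fun _ h => h,
    TopologicalSpace.isTopologicalBasis_of_isOpen_of_nhds (fun _ h => h.isOpen) ?_⟩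
  intro x U hxU hU
  obtain ⟨f, hf, hfx, hfU⟩ := CompletelyRegularSpace.completely_regular_isOpen x U hU hxU
  set g : X → ℝ := fun z => f z
  have hg : Continuous g := continuous_subtype_val.comp hf
  obtain ⟨r, hr, hrg⟩ : ∃ r ∈ Ioo (0 : ℝ) 1, r ∉ range g := by
    by_contra! h
    exact not_pytkeevProperty_of_Ioo_subset_range hg (fun z => (f z).2) h hPyt
  refine ⟨g ⁻¹' Iio r, isClopen_preimage_Iio_of_notMem_range hg hrg, by simp [g, hfx, hr.1],
    fun z hz => ?_⟩
  by_contra hzU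
  have : g z = 1 := by simp [g, hfU hzU]
  exact hr.2.not_ge (this ▸ hz.le)
end
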